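/- Let f be a piecewise contracting interval map on X satisfying the separation property. Let x ∈ X̃ with itinerary θ. If f^{t+n}(x) ∈ A_{i_1 i_2 … i_n} for some t ≥ 0 and n ≥ 1, then (i_1,…,i_n) = (θ_t,…,θ_{t+n−1}). -/

import Mathlib

/-!
Write `A_{w i} = cl f(A_w ∩ X_i)`. If `f^{t+n}(x) = f(y)` with `y = f^{t+n-1}(x) ∈ X_j` lies in
`A_{w i}`, then `f(y)` lies in both `cl f(X_i)` and `cl f(X_j)`, so separation forces `i = j`.
Since `f` is strictly monotone on the interval `X_i`, `f(y) ∈ cl f(S)` with `S ⊆ X_i` and `y ∈ X_i`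
forces `y ∈ cl S`: if, say, `S` lies below `y`, then `f(y)` is the supremum of `f(S)`, and an
upper bound `b < y` of `S` would give the smaller upper bound `f(b)`. Hence `y ∈ A_w`, and the word is recovered letter
by letter.
-/

open Set Filter Metric Topology

/-- A piecewise contracting interval map (PCIM) on the compact interval `X = [a,b]`:
there are `N ≥ 1` pairwise disjoint nonempty open (relative to `X`) subintervals
whose closures cover `X`, and `f` contracts with rate `lam ∈ (0,1)` on each piece. -/
structure PCIM where
  a : ℝ
  b : ℝ
  hab : a < b
  N : ℕ
  hN : 1 ≤ N
  f : ℝ → ℝ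
  lam : ℝ
  hlam₀ : 0 < lam
  hlam₁ : lam < 1
  piece : Fin N → Set ℝ
  piece_nonempty : ∀ i, (piece i).Nonempty
  piece_interval : ∀ i, ∃ c d : ℝ, piece i = Set.Ioo c d ∩ Set.Icc a b
  piece_disjoint : ∀ i j, i ≠ j → Disjoint (piece i) (piece j)
  cover : Set.Icc a b = ⋃ i, closure (piece i)
  mapsTo : Set.MapsTo f (Set.Icc a b) (Set.Icc a b)
  contract : ∀ i, ∀ x ∈ piece i, ∀ y ∈ piece i, |f x - f y| ≤ lam * |x - y|

namespace PCIM

variable (P : PCIM)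

/-- The underlying compact interval `X`. -/
def X : Set ℝ := Set.Icc P.a P.b

/-- `X* = ⋃ i, X_i`, the union of the contraction pieces. -/
def Xstar : Set ℝ := ⋃ i, P.piece i

/-- `Δ = X \ X*`, the set of boundaries of the contraction pieces. -/
def Delta : Set ℝ := P.X \ P.Xstar

/-- `X̃ = ⋂_{j ≥ 0} f⁻ʲ(X*)`, the points all of whose iterates are well defined. -/
def Xtilde : Set ℝ := ⋂ j : ℕ, (P.f^[j]) ⁻¹' P.Xstar

/-- `D`: the set of one-sided limits of `f` at the points of `Δ`. -/
def D : Set ℝ :=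
  {L | ∃ c ∈ P.Delta,
    ((𝓝[P.X ∩ Set.Iio c] c).NeBot ∧ Filter.Tendsto P.f (𝓝[P.X ∩ Set.Iio c] c) (𝓝 L)) ∨
    ((𝓝[P.X ∩ Set.Ioi c] c).NeBot ∧ Filter.Tendsto P.f (𝓝[P.X ∩ Set.Ioi c] c) (𝓝 L))}

/-- A set `A` is `f`-pseudo-invariant if for every `x ∈ A` at least one of the
one-sided limits of `f` at `x` belongs to `A`. -/
def PseudoInvariant (A : Set ℝ) : Prop :=
  ∀ x ∈ A,
    (∃ L ∈ A, (𝓝[P.X ∩ Set.Iio x] x).NeBot ∧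
      Filter.Tendsto P.f (𝓝[P.X ∩ Set.Iio x] x) (𝓝 L)) ∨
    (∃ L ∈ A, (𝓝[P.X ∩ Set.Ioi x] x).NeBot ∧
      Filter.Tendsto P.f (𝓝[P.X ∩ Set.Ioi x] x) (𝓝 L))

/-- `f` is piecewise monotonic: strictly monotone on each contraction piece. -/
def PiecewiseMonotonic : Prop :=
  ∀ i, StrictMonoOn P.f (P.piece i) ∨ StrictAntiOn P.f (P.piece i)

/-- `f` satisfies the separation property: it is piecewise monotonic and the closures
of the images of distinct pieces are disjoint. -/
def SeparationProperty : Prop :=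
  P.PiecewiseMonotonic ∧
    ∀ i j, i ≠ j → closure (P.f '' P.piece i) ∩ closure (P.f '' P.piece j) = ∅

/-- The iterates `Λ_n` defining the attractor: `Λ_0 = X`,
`Λ_{n+1} = cl (f (Λ_n \ Δ))`. -/
def LambdaIter : (P : PCIM) → ℕ → Set ℝ
  | Q, 0 => Q.X
  | Q, n + 1 => closure (Q.f '' (LambdaIter Q n \ Q.Delta))

/-- The attractor `Λ = ⋂_{n ≥ 1} Λ_n`. -/
def Lambda : Set ℝ := ⋂ n : ℕ, P.LambdaIter (n + 1)

/-- The atom associated to the word `w = [i₁, …, iₙ]`: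
`A_{i₁…iₙ} = F_{iₙ} ∘ ⋯ ∘ F_{i₁}(X)` where `F_i(A) = cl (f (A ∩ X_i))`. -/
def atomOf (w : List (Fin P.N)) : Set ℝ :=
  w.foldl (fun A i => closure (P.f '' (A ∩ P.piece i))) P.X

/-- `𝒜_n`: the set of (nonempty) atoms of generation `n`. -/
def atoms (n : ℕ) : Set (Set ℝ) :=
  {A | ∃ w : List (Fin P.N), w.length = n ∧ P.atomOf w = A ∧ A.Nonempty}

/-- `θ` is the itinerary of `x`: `f^t(x) ∈ X_{θ_t}` for all `t`. -/
def IsItinerary (x : ℝ) (θ : ℕ → Fin P.N) : Prop :=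
  ∀ t : ℕ, P.f^[t] x ∈ P.piece (θ t)

/-- The word `θ_t θ_{t+1} … θ_{t+n-1}` of length `n` of the sequence `θ`. -/
def word (θ : ℕ → Fin P.N) (t n : ℕ) : List (Fin P.N) :=
  (List.range n).map fun k => θ (t + k)

/-- `L_n(θ)`: the set of words of length `n` occurring in `θ`. -/
def lang (θ : ℕ → Fin P.N) (n : ℕ) : Set (List (Fin P.N)) :=
  {w | ∃ t : ℕ, w = P.word θ t n}

/-- The complexity function `p_θ(n) = #L_n(θ)`. -/
noncomputable def complexity (θ : ℕ → Fin P.N) (n : ℕ) : ℕ := (P.lang θ n).ncard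

/-- The forward orbit of `x` under `f`. -/
def orbit (x : ℝ) : Set ℝ := {y | ∃ k : ℕ, P.f^[k] x = y}

/-- The ω-limit set of `x` under `f`. -/
def omegaLimitSet (x : ℝ) : Set ℝ :=
  ⋂ n : ℕ, closure {y | ∃ m : ℕ, n ≤ m ∧ P.f^[m] x = y}

/-- A compact pseudo-invariant set `A` is `X̃`-minimal if the orbit of every point
of `A ∩ X̃` is dense in `A`. -/
def XtildeMinimal (A : Set ℝ) : Prop :=
  IsCompact A ∧ P.PseudoInvariant A ∧ ∀ x ∈ A ∩ P.Xtilde, A ⊆ closure (P.orbit x)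

/-- A periodic orbit contained in `X̃`. -/
def IsPeriodicOrbit (A : Set ℝ) : Prop :=
  ∃ x ∈ P.Xtilde, ∃ p : ℕ, 1 ≤ p ∧ P.f^[p] x = x ∧ A = P.orbit x

end PCIM

/-- A Cantor set: nonempty, compact, perfect and totally disconnected. -/
def IsCantorSet (A : Set ℝ) : Prop :=
  A.Nonempty ∧ IsCompact A ∧ Perfect A ∧ IsTotallyDisconnected A

section ClosurePullback

variable {α β : Type*} [LinearOrder α] [TopologicalSpace α] [OrderTopology α]
  [LinearOrder β] [TopologicalSpace β] [OrderTopology β] {f : α → β} {s S : Set α} {y : α}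

theorem StrictMonoOn.mem_closure_of_apply_mem_closure_image_of_le (hf : StrictMonoOn f s)
    (hs : s.OrdConnected) (hS : S ⊆ s) (hy : y ∈ s) (hSy : ∀ a ∈ S, a ≤ y)
    (h : f y ∈ closure (f '' S)) : y ∈ closure S := by
  obtain ⟨a₀, ha₀⟩ : S.Nonempty := image_nonempty.1 (closure_nonempty_iff.1 ⟨_, h⟩)
  have hlub : IsLUB (f '' S) (f y) := isLUB_of_mem_closure
    (forall_mem_image.2 fun a ha => hf.monotoneOn (hS ha) hy (hSy a ha)) h
  refine IsLUB.mem_closure ⟨hSy, fun b hb => not_lt.1 fun hby => ?_⟩ ⟨a₀, ha₀⟩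
  have hbs : b ∈ s := hs.out (hS ha₀) hy ⟨hb ha₀, hby.le⟩
  exact (hf hbs hy hby).not_ge
    (hlub.2 (forall_mem_image.2 fun a ha => hf.monotoneOn (hS ha) hbs (hb ha)))

theorem StrictMonoOn.mem_closure_of_apply_mem_closure_image (hf : StrictMonoOn f s)
    (hs : s.OrdConnected) (hS : S ⊆ s) (hy : y ∈ s) (h : f y ∈ closure (f '' S)) :
    y ∈ closure S := by
  have hsplit : S = {a ∈ S | a ≤ y} ∪ {a ∈ S | y ≤ a} := by
    ext a; simp only [mem_union, mem_sep_iff, ← and_or_left, le_total, and_true]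
  rw [hsplit, image_union, closure_union] at h
  rw [hsplit, closure_union]
  rcases h with h | h
  · exact .inl <| hf.mem_closure_of_apply_mem_closure_image_of_le hs
      (sep_subset _ _ |>.trans hS) hy (fun a ha => ha.2) h
  -- the part above `y` is the part below `y` for the dual orders
  · exact .inr <| hf.dual.mem_closure_of_apply_mem_closure_image_of_le (α := αᵒᵈ) (β := βᵒᵈ)
      hs.dual (sep_subset _ _ |>.trans hS) hy (fun a ha => ha.2) h

theorem StrictAntiOn.mem_closure_of_apply_mem_closure_image (hf : StrictAntiOn f s)
    (hs : s.OrdConnected) (hS : S ⊆ s) (hy : y ∈ s) (h : f y ∈ closure (f '' S)) :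
    y ∈ closure S :=
  hf.dual_right.mem_closure_of_apply_mem_closure_image (β := βᵒᵈ) hs hS hy h

end ClosurePullback

namespace PCIM

variable (P : PCIM)

theorem ordConnected_piece (i : Fin P.N) : (P.piece i).OrdConnected := by
  obtain ⟨c, d, hcd⟩ := P.piece_interval i
  rw [hcd]
  exact ordConnected_Ioo.inter ordConnected_Icc

theorem atomOf_append_singleton (w : List (Fin P.N)) (i : Fin P.N) :
    P.atomOf (w ++ [i]) = closure (P.f '' (P.atomOf w ∩ P.piece i)) := by
  simp [atomOf, List.foldl_append]

theorem isClosed_atomOf (w : List (Fin P.N)) : IsClosed (P.atomOf w) := by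
  induction w using List.reverseRecOn with
  | nil => exact isClosed_Icc
  | append_singleton w i _ => rw [atomOf_append_singleton]; exact isClosed_closure

theorem word_succ (θ : ℕ → Fin P.N) (t n : ℕ) :
    P.word θ t (n + 1) = P.word θ t n ++ [θ (t + n)] := by
  simp [word, List.range_succ]

variable {P}

theorem SeparationProperty.eq_of_mem_closure_image (hsep : P.SeparationProperty)
    {i j : Fin P.N} {z : ℝ} (hi : z ∈ closure (P.f '' P.piece i))
    (hj : z ∈ closure (P.f '' P.piece j)) : i = j := by
  by_contra hij
  simpa [hsep.2 i j hij] using mem_inter hi hj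

theorem SeparationProperty.mem_atomOf_of_apply_mem_atomOf_append
    (hsep : P.SeparationProperty) {w : List (Fin P.N)} {i j : Fin P.N} {y : ℝ}
    (hy : y ∈ P.piece j) (hfy : P.f y ∈ P.atomOf (w ++ [i])) :
    i = j ∧ y ∈ P.atomOf w := by
  rw [atomOf_append_singleton] at hfy
  have hij : i = j := hsep.eq_of_mem_closure_image
    (closure_mono (image_mono inter_subset_right) hfy) (subset_closure (mem_image_of_mem _ hy))
  subst hij
  have hyS : y ∈ closure (P.atomOf w ∩ P.piece i) := by
    rcases hsep.1 i with hmono | hanti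
    · exact hmono.mem_closure_of_apply_mem_closure_image (P.ordConnected_piece i)
        inter_subset_right hy hfy
    · exact hanti.mem_closure_of_apply_mem_closure_image (P.ordConnected_piece i)
        inter_subset_right hy hfy
  exact ⟨rfl, (P.isClosed_atomOf w).closure_subset (closure_mono inter_subset_left hyS)⟩

theorem SeparationProperty.word_eq_of_iterate_mem_atomOf (hsep : P.SeparationProperty)
    {x : ℝ} {θ : ℕ → Fin P.N} (hθ : P.IsItinerary x θ) (t : ℕ) {w : List (Fin P.N)}
    (hmem : P.f^[t + w.length] x ∈ P.atomOf w) : w = P.word θ t w.length := by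
  induction w using List.reverseRecOn with
  | nil => rfl
  | append_singleton w i ih =>
    rw [List.length_append, List.length_singleton, ← add_assoc,
      Function.iterate_succ_apply'] at hmem
    obtain ⟨rfl, hw⟩ := hsep.mem_atomOf_of_apply_mem_atomOf_append (hθ (t + w.length)) hmem
    rw [List.length_append, List.length_singleton, word_succ, ← ih hw]

end PCIM

theorem atom_mem_determines_itinerary_general (P : PCIM) (hsep : P.SeparationProperty)
    (x : ℝ) (θ : ℕ → Fin P.N) (hθ : P.IsItinerary x θ) :
    ∀ t n : ℕ, 1 ≤ n → ∀ w : List (Fin P.N), w.length = n →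
      P.f^[t + n] x ∈ P.atomOf w → w = P.word θ t n := by
  rintro t n - w rfl hmem
  exact hsep.word_eq_of_iterate_mem_atomOf hθ t hmem

/-- Under the separation property, if `θ` is the itinerary of
`x ∈ X̃` and `f^{t+n}(x) ∈ A_{i₁…iₙ}`, then `(i₁,…,iₙ) = (θ_t,…,θ_{t+n-1})`. -/
theorem atom_mem_determines_itinerary (P : PCIM) (hsep : P.SeparationProperty)
    (x : ℝ) (hx : x ∈ P.Xtilde) (θ : ℕ → Fin P.N) (hθ : P.IsItinerary x θ) :
    ∀ t n : ℕ, 1 ≤ n → ∀ w : List (Fin P.N), w.length = n →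
      P.f^[t + n] x ∈ P.atomOf w → w = P.word θ t n :=
  atom_mem_determines_itinerary_general P hsep x θ hθ
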